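/- In the clusters setting: let C ∈ 𝕊₊^d, let W(a₁),…,W(a_m) ∈ 𝕊₊^d satisfy (C^{1/2} W(a_i) C^{1/2})(C^{1/2} W(a_j) C^{1/2}) = 0 for i ≠ j, and let W_ρ = (1/m) Σ_{i=1}^m W(a_i). Then (1/m) Σ_{i=1}^m ‖C^{1/2} W(a_i)^{1/2}‖_* = (1/√m) ‖C^{1/2} W_ρ^{1/2}‖_*. -/

import Mathlib

open Matrix

open scoped ComplexOrder in
/-- The positive semidefinite square root of a positive semidefinite matrix
(the definition `Matrix.PosSemidef.sqrt` of the older Mathlib, since removed). -/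
noncomputable def Matrix.PosSemidef.sqrt {n 𝕜 : Type*} [Fintype n] [DecidableEq n] [RCLike 𝕜]
    {A : Matrix n n 𝕜} (hA : A.PosSemidef) : Matrix n n 𝕜 :=
  hA.1.eigenvectorUnitary.1 * diagonal ((↑) ∘ (√·) ∘ hA.1.eigenvalues) *
  (star hA.1.eigenvectorUnitary : Matrix n n 𝕜)

/-- The trace (nuclear) norm `‖M‖_* = Tr((Mᵀ M)^{1/2})`. -/
noncomputable def traceNorm {d : ℕ} (M : Matrix (Fin d) (Fin d) ℝ) : ℝ :=
  (Matrix.posSemidef_conjTranspose_mul_self M).sqrt.trace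

/-!
Put `Aᵢ = C^{1/2} W(aᵢ) C^{1/2}`. Since `MᴴM` and `MMᴴ` have the same characteristic polynomial,
hence the same eigenvalues, `‖C^{1/2} W^{1/2}‖_* = Tr (C^{1/2} W C^{1/2})^{1/2}`. The orthogonality
`Aᵢ Aⱼ = 0` passes to the square roots, so `(Σ Aᵢ^{1/2})² = Σ Aᵢ`, and uniqueness of the positive
semidefinite square root gives `(Σ Aᵢ)^{1/2} = Σ Aᵢ^{1/2}`. With `C^{1/2} W_ρ C^{1/2} = m⁻¹ Σ Aᵢ`
both sides become `m⁻¹ Σ Tr Aᵢ^{1/2}`.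
-/

namespace Matrix.PosSemidef

open scoped ComplexOrder MatrixOrder

variable {n 𝕜 : Type*} [Fintype n] [DecidableEq n] [RCLike 𝕜]

lemma sqrt_eq_cfcSqrt {A : Matrix n n 𝕜} (hA : A.PosSemidef) : hA.sqrt = CFC.sqrt A := by
  rw [CFC.sqrt_eq_cfc, cfc_nnreal_eq_real _ A hA.nonneg, hA.1.cfc_eq, IsHermitian.cfc,
    Unitary.conjStarAlgAut_apply]
  unfold Matrix.PosSemidef.sqrt
  congr 2
  ext i j
  simp only [diagonal_apply, Function.comp_apply, Real.coe_sqrt,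
    Real.coe_toNNReal _ (hA.eigenvalues_nonneg _)]

lemma posSemidef_sqrt {A : Matrix n n 𝕜} (hA : A.PosSemidef) : hA.sqrt.PosSemidef := by
  rw [hA.sqrt_eq_cfcSqrt]
  exact (CFC.sqrt_nonneg A).posSemidef

lemma sqrt_mul_self {A : Matrix n n 𝕜} (hA : A.PosSemidef) : hA.sqrt * hA.sqrt = A := by
  rw [hA.sqrt_eq_cfcSqrt]
  exact CFC.sqrt_mul_sqrt_self A hA.nonneg

lemma sqrt_eq_of_sq_eq {A B : Matrix n n 𝕜} (hA : A.PosSemidef) (hB : B.PosSemidef)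
    (h : B ^ 2 = A) : hA.sqrt = B := by
  rw [hA.sqrt_eq_cfcSqrt, ← h, CFC.sqrt_sq B hB.nonneg]

lemma sqrt_smul {A : Matrix n n 𝕜} (hA : A.PosSemidef) {c : ℝ} (hc : 0 ≤ c)
    (hcA : (c • A).PosSemidef) : hcA.sqrt = √c • hA.sqrt :=
  hcA.sqrt_eq_of_sq_eq (hA.posSemidef_sqrt.smul (Real.sqrt_nonneg c)) <| by
    rw [smul_pow, Real.sq_sqrt hc, sq, hA.sqrt_mul_self]

lemma sqrt_mul_sqrt_eq_zero {A B : Matrix n n 𝕜} (hA : A.PosSemidef) (hB : B.PosSemidef)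
    (hAB : A * B = 0) : hA.sqrt * hB.sqrt = 0 := by
  have hBA : B * A = 0 := by
    simpa [hA.1.eq, hB.1.eq] using congrArg (·ᴴ) hAB
  have hA' := hA.posSemidef_sqrt.1.eq
  have hB' := hB.posSemidef_sqrt.1.eq
  have hsqrtA_B : hA.sqrt * B = 0 := by
    rw [← conjTranspose_mul_self_eq_zero, conjTranspose_mul, hB.1.eq, hA',
      show B * hA.sqrt * (hA.sqrt * B) = B * (hA.sqrt * hA.sqrt) * B by noncomm_ring,
      hA.sqrt_mul_self, hBA, zero_mul]
  rw [← self_mul_conjTranspose_eq_zero, conjTranspose_mul, hA', hB',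
    show hA.sqrt * hB.sqrt * (hB.sqrt * hA.sqrt) = hA.sqrt * (hB.sqrt * hB.sqrt) * hA.sqrt by
      noncomm_ring, hB.sqrt_mul_self, hsqrtA_B, zero_mul]

lemma sqrt_sum_eq_sum_sqrt {ι : Type*} [Fintype ι] {A : ι → Matrix n n 𝕜}
    (hA : ∀ i, (A i).PosSemidef) (horth : Pairwise fun i j ↦ A i * A j = 0)
    (hS : (∑ i, A i).PosSemidef) : hS.sqrt = ∑ i, (hA i).sqrt := by
  refine hS.sqrt_eq_of_sq_eq (posSemidef_sum _ fun i _ ↦ (hA i).posSemidef_sqrt) ?_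
  rw [sq, Finset.sum_mul_sum]
  refine Finset.sum_congr rfl fun i _ ↦ ?_
  rw [Finset.sum_eq_single i (fun j _ hji ↦ sqrt_mul_sqrt_eq_zero _ _ (horth hji.symm))
    (by simp), (hA i).sqrt_mul_self]

lemma sqrt_mul_sqrt_mul_conjTranspose {A B : Matrix n n 𝕜} (hA : A.PosSemidef)
    (hB : B.PosSemidef) : hA.sqrt * hB.sqrt * (hA.sqrt * hB.sqrt)ᴴ = hA.sqrt * B * hA.sqrt := by
  rw [conjTranspose_mul, hA.posSemidef_sqrt.1.eq, hB.posSemidef_sqrt.1.eq, mul_assoc,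
    ← mul_assoc hB.sqrt, hB.sqrt_mul_self, mul_assoc]

lemma trace_sqrt {A : Matrix n n 𝕜} (hA : A.PosSemidef) :
    hA.sqrt.trace = ∑ i, (√(hA.1.eigenvalues i) : 𝕜) := by
  rw [Matrix.PosSemidef.sqrt, trace_mul_cycle, Unitary.coe_star_mul_self, one_mul, trace_diagonal]
  rfl

lemma trace_sqrt_eq_of_charpoly_eq {A B : Matrix n n 𝕜} (hA : A.PosSemidef) (hB : B.PosSemidef)
    (h : A.charpoly = B.charpoly) : hA.sqrt.trace = hB.sqrt.trace := by
  rw [trace_sqrt, trace_sqrt, (hA.1.eigenvalues_eq_eigenvalues_iff hB.1).mpr h]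

end Matrix.PosSemidef

lemma traceNorm_eq_trace_sqrt {d : ℕ} {M B : Matrix (Fin d) (Fin d) ℝ} (hB : B.PosSemidef)
    (h : M * Mᴴ = B) : traceNorm M = hB.sqrt.trace :=
  PosSemidef.trace_sqrt_eq_of_charpoly_eq _ hB (by rw [← h, charpoly_mul_comm])

theorem stmt9_general {d m : ℕ}
    (C : Matrix (Fin d) (Fin d) ℝ) (hC : C.PosSemidef)
    (W : Fin m → Matrix (Fin d) (Fin d) ℝ) (hW : ∀ i, (W i).PosSemidef)
    (horth : ∀ i j, i ≠ j →
      (hC.sqrt * W i * hC.sqrt) * (hC.sqrt * W j * hC.sqrt) = 0)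
    (Wρ : Matrix (Fin d) (Fin d) ℝ) (hWρdef : Wρ = (m : ℝ)⁻¹ • ∑ i, W i)
    (hWρ : Wρ.PosSemidef) :
    (m : ℝ)⁻¹ * ∑ i, traceNorm (hC.sqrt * (hW i).sqrt) =
      (Real.sqrt m)⁻¹ * traceNorm (hC.sqrt * hWρ.sqrt) := by
  set A := fun i ↦ hC.sqrt * W i * hC.sqrt
  have hA (i) : (A i).PosSemidef := by
    simpa only [hC.posSemidef_sqrt.1.eq] using (hW i).mul_mul_conjTranspose_same hC.sqrt
  have hS : (∑ i, A i).PosSemidef := posSemidef_sum _ fun i _ ↦ hA i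
  have hmS : ((m : ℝ)⁻¹ • ∑ i, A i).PosSemidef := hS.smul (by positivity)
  have lhs (i) : traceNorm (hC.sqrt * (hW i).sqrt) = (hA i).sqrt.trace :=
    traceNorm_eq_trace_sqrt _ (hC.sqrt_mul_sqrt_mul_conjTranspose (hW i))
  have rhs : traceNorm (hC.sqrt * hWρ.sqrt) = hmS.sqrt.trace := by
    refine traceNorm_eq_trace_sqrt _ ?_
    rw [hC.sqrt_mul_sqrt_mul_conjTranspose, hWρdef, Matrix.mul_smul, Matrix.smul_mul,
      Finset.mul_sum, Finset.sum_mul]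
  rw [rhs, hS.sqrt_smul (by positivity), hS.sqrt_sum_eq_sum_sqrt hA horth, trace_smul,
    trace_sum, smul_eq_mul, ← mul_assoc, Real.sqrt_inv, ← mul_inv,
    Real.mul_self_sqrt (Nat.cast_nonneg m)]
  simp_rw [lhs]

/-- Clusters setting: if `(C^{1/2} W(aᵢ) C^{1/2})(C^{1/2} W(aⱼ) C^{1/2}) = 0` for `i ≠ j`
and `W_ρ = (1/m) Σᵢ W(aᵢ)`, then
`(1/m) Σᵢ ‖C^{1/2} W(aᵢ)^{1/2}‖_* = (1/√m) ‖C^{1/2} W_ρ^{1/2}‖_*`. -/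
theorem stmt9 {d m : ℕ} (hm : 0 < m)
    (C : Matrix (Fin d) (Fin d) ℝ) (hC : C.PosSemidef)
    (W : Fin m → Matrix (Fin d) (Fin d) ℝ) (hW : ∀ i, (W i).PosSemidef)
    (horth : ∀ i j, i ≠ j →
      (hC.sqrt * W i * hC.sqrt) * (hC.sqrt * W j * hC.sqrt) = 0)
    (Wρ : Matrix (Fin d) (Fin d) ℝ) (hWρdef : Wρ = (m : ℝ)⁻¹ • ∑ i, W i)
    (hWρ : Wρ.PosSemidef) :
    (m : ℝ)⁻¹ * ∑ i, traceNorm (hC.sqrt * (hW i).sqrt) =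
      (Real.sqrt m)⁻¹ * traceNorm (hC.sqrt * hWρ.sqrt) :=
  stmt9_general C hC W hW horth Wρ hWρdef hWρ
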